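/- For every integer j ≥ 2, the image of ν_j in K lies in the intermediate field ℂ(ν₂, ν₃, …, ν_{2n−1}) ⊆ K generated over ℂ by the images of ν₂, …, ν_{2n−1}. -/

import Mathlib

open MvPolynomial Finset

noncomputable section

def Zv (n : ℕ) (j : Fin n) : MvPolynomial (Fin n ⊕ Fin n) ℂ := X (Sum.inl j)

def Wv (n : ℕ) (j : Fin n) : MvPolynomial (Fin n ⊕ Fin n) ℂ := X (Sum.inr j)

/-- The `k`-th normalized harmonic moment. -/
def nu (n : ℕ) [NeZero n] (k : ℕ) : MvPolynomial (Fin n ⊕ Fin n) ℂ :=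
  C (Complex.I / 4) *
    ∑ j : Fin n, (Wv n j - Wv n (j + 1)) *
      ∑ m ∈ Finset.range k, Zv n j ^ (k - 1 - m) * Zv n (j + 1) ^ m

/-- The field of fractions `K = ℂ(z₁,…,zₙ,w₁,…,wₙ)` of `R`. -/
abbrev KK (n : ℕ) := FractionRing (MvPolynomial (Fin n ⊕ Fin n) ℂ)

set_option linter.unusedSectionVars false
set_option synthInstance.maxHeartbeats 1000000
set_option maxHeartbeats 1000000
namespace St4
variable (n : ℕ) [NeZero n]
abbrev R (n : ℕ) := MvPolynomial (Fin n ⊕ Fin n) ℂ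
def phi : R n →+* KK n := algebraMap _ _
def Pz : Polynomial (R n) := ∏ j : Fin n, (Polynomial.X - Polynomial.C (Zv n j))
def cf (i : ℕ) : R n := (Pz n).coeff i
def Sp (k : ℕ) (j : Fin n) : R n := ∑ m ∈ Finset.range k, Zv n j ^ (k - 1 - m) * Zv n (j + 1) ^ m

lemma Pz_monic : (Pz n).Monic := by
  apply Polynomial.monic_prod_of_monic; intro j _; exact Polynomial.monic_X_sub_C _

lemma Pz_natDegree : (Pz n).natDegree = n := by
  rw [Pz, Polynomial.natDegree_prod]
  · simp
  · intro i _; exact Polynomial.X_sub_C_ne_zero _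

lemma cf_top : cf n n = 1 := by
  have := (Pz_monic n).coeff_natDegree
  rwa [Pz_natDegree] at this

lemma sum_cf (j : Fin n) : ∑ i ∈ Finset.range (n+1), cf n i * (Zv n j)^i = 0 := by
  have h := Polynomial.eval_eq_sum_range (p := Pz n) (x := Zv n j)
  rw [Pz_natDegree] at h
  simp only [cf]
  rw [← h, Pz, Polynomial.eval_prod]
  apply Finset.prod_eq_zero (Finset.mem_univ j)
  simp

lemma phi_inj : Function.Injective (phi n) := IsFractionRing.injective _ _

lemma Z_sub_ne (i j : Fin n) (h : i ≠ j) : Zv n i - Zv n j ≠ 0 := by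
  rw [sub_ne_zero, Zv, Zv]
  exact fun hh => h (Sum.inl_injective (X_injective hh))

lemma Sp_mul (k : ℕ) (j : Fin n) :
    (Zv n j - Zv n (j+1)) * Sp n k j = Zv n j ^ k - Zv n (j+1) ^ k := by
  have h := geom_sum₂_mul (Zv n (j+1)) (Zv n j) k
  have : (∑ i ∈ Finset.range k, Zv n (j+1) ^ i * Zv n j ^ (k - 1 - i)) = Sp n k j := by
    apply Finset.sum_congr rfl; intro m _; ring
  rw [this] at h
  have h2 : (Zv n j - Zv n (j+1)) * Sp n k j = - (Sp n k j * (Zv n (j+1) - Zv n j)) := by ring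
  rw [h2, h]; ring

lemma nu_eq (k : ℕ) : nu n k = C (Complex.I / 4) * ∑ j : Fin n, (Wv n j - Wv n (j + 1)) * Sp n k j := rfl

lemma fin_one_val (hn : 3 ≤ n) : ((1 : Fin n) : ℕ) = 1 := by
  rw [Fin.val_one']; exact Nat.mod_eq_of_lt (by omega)

lemma fin_one_ne (hn : 3 ≤ n) : (1 : Fin n) ≠ 0 := by
  intro h
  have : ((1:Fin n) : ℕ) = ((0:Fin n) : ℕ) := by rw [h]
  rw [fin_one_val n hn, Fin.val_zero] at this
  exact one_ne_zero this

lemma fin_two_ne (hn : 3 ≤ n) : (2 : Fin n) ≠ 0 := by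
  intro h
  have h2 : ((2 : Fin n) : ℕ) = 2 := by
    have : (2 : Fin n) = (1 : Fin n) + 1 := by ext; simp [Fin.val_add]
    rw [this, Fin.val_add, fin_one_val n hn]; exact Nat.mod_eq_of_lt (by omega)
  have : ((2:Fin n) : ℕ) = ((0:Fin n) : ℕ) := by rw [h]
  rw [h2, Fin.val_zero] at this
  exact two_ne_zero this

lemma add_one_ne (hn : 3 ≤ n) (j : Fin n) : j + 1 ≠ j := by
  intro h
  exact fin_one_ne n hn (by rwa [add_eq_left] at h)

lemma sub_one_ne (hn : 3 ≤ n) (j : Fin n) : j - 1 ≠ j := by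
  intro h
  apply fin_one_ne n hn
  have : j - 1 + 1 = j + 1 := by rw [h]
  rw [sub_add_cancel] at this
  rwa [left_eq_add] at this

lemma sub_one_ne_add_one (hn : 3 ≤ n) (j : Fin n) : j - 1 ≠ j + 1 := by
  intro h
  apply fin_two_ne n hn
  have h1 : j - 1 + 1 = j + 1 + 1 := by rw [h]
  rw [sub_add_cancel, add_assoc] at h1
  have h2 : (1 : Fin n) + 1 = 2 := by ext; simp [Fin.val_add]
  rw [h2] at h1
  exact (left_eq_add.mp h1)

lemma inner_zero (hn : 3 ≤ n) (q : ℕ) (j : Fin n) :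
    ∑ i ∈ Finset.range (n+1), cf n i * Sp n (q+i) j = 0 := by
  apply mul_left_cancel₀ (Z_sub_ne n j (j+1) (fun h => add_one_ne n hn j h.symm))
  rw [mul_zero, Finset.mul_sum]
  have : ∀ i ∈ Finset.range (n+1),
      (Zv n j - Zv n (j+1)) * (cf n i * Sp n (q+i) j)
        = cf n i * Zv n j ^ q * Zv n j ^ i - cf n i * Zv n (j+1) ^ q * Zv n (j+1) ^ i := by
    intro i _
    have := Sp_mul n (q+i) j
    calc (Zv n j - Zv n (j+1)) * (cf n i * Sp n (q+i) j)
        = cf n i * ((Zv n j - Zv n (j+1)) * Sp n (q+i) j) := by ring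
      _ = cf n i * (Zv n j ^ (q+i) - Zv n (j+1) ^ (q+i)) := by rw [this]
      _ = _ := by rw [pow_add, pow_add]; ring
  rw [Finset.sum_congr rfl this, Finset.sum_sub_distrib]
  have e1 : ∑ i ∈ Finset.range (n+1), cf n i * Zv n j ^ q * Zv n j ^ i
      = Zv n j ^ q * ∑ i ∈ Finset.range (n+1), cf n i * Zv n j ^ i := by
    rw [Finset.mul_sum]; apply Finset.sum_congr rfl; intro i _; ring
  have e2 : ∑ i ∈ Finset.range (n+1), cf n i * Zv n (j+1) ^ q * Zv n (j+1) ^ i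
      = Zv n (j+1) ^ q * ∑ i ∈ Finset.range (n+1), cf n i * Zv n (j+1) ^ i := by
    rw [Finset.mul_sum]; apply Finset.sum_congr rfl; intro i _; ring
  rw [e1, e2, sum_cf, sum_cf, mul_zero, mul_zero, sub_zero]

lemma rec_R (hn : 3 ≤ n) (q : ℕ) : ∑ i ∈ Finset.range (n+1), cf n i * nu n (q+i) = 0 := by
  have : ∀ i ∈ Finset.range (n+1), cf n i * nu n (q+i)
      = C (Complex.I / 4) * ∑ j : Fin n, (Wv n j - Wv n (j + 1)) * (cf n i * Sp n (q+i) j) := by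
    intro i _
    rw [nu_eq n (q+i), mul_left_comm]
    congr 1
    rw [Finset.mul_sum]
    apply Finset.sum_congr rfl
    intro j _
    ring
  rw [Finset.sum_congr rfl this, ← Finset.mul_sum, Finset.sum_comm]
  have : ∀ j ∈ (Finset.univ : Finset (Fin n)),
      ∑ i ∈ Finset.range (n+1), (Wv n j - Wv n (j + 1)) * (cf n i * Sp n (q+i) j)
      = (Wv n j - Wv n (j + 1)) * ∑ i ∈ Finset.range (n+1), cf n i * Sp n (q+i) j := by
    intro j _; rw [Finset.mul_sum]
  rw [Finset.sum_congr rfl this]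
  simp [inner_zero n hn]
def NN (k : ℕ) : KK n := phi n (nu n k)
def zz (j : Fin n) : KK n := phi n (Zv n j)
def aa (j : Fin n) : KK n :=
  phi n (C (Complex.I / 4) * (Wv n j - Wv n (j+1))) / phi n (Zv n j - Zv n (j+1))
def bb (j : Fin n) : KK n := aa n j - aa n (j-1)

lemma phiZ_sub_ne (i j : Fin n) (h : i ≠ j) : phi n (Zv n i - Zv n j) ≠ 0 := by
  intro hh
  exact Z_sub_ne n i j h (phi_inj n (by rw [hh, map_zero]))

lemma zz_inj : Function.Injective (zz n) := by
  intro i j h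
  by_contra hne
  exact phiZ_sub_ne n i j hne (by rw [map_sub]; rw [show phi n (Zv n i) = zz n i from rfl,
    show phi n (Zv n j) = zz n j from rfl, h, sub_self])

lemma aa_mul (hn : 3 ≤ n) (j : Fin n) :
    aa n j * (zz n j - zz n (j+1)) = phi n (C (Complex.I / 4) * (Wv n j - Wv n (j+1))) := by
  have h : zz n j - zz n (j+1) = phi n (Zv n j - Zv n (j+1)) := by rw [map_sub]; rfl
  rw [aa, h, div_mul_cancel₀]
  exact phiZ_sub_ne n j (j+1) (fun hh => add_one_ne n hn j hh.symm)

lemma NN_rep (hn : 3 ≤ n) (k : ℕ) : NN n k = ∑ j : Fin n, bb n j * zz n j ^ k := by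
  have term : ∀ j : Fin n,
      phi n (C (Complex.I / 4)) * (phi n (Wv n j - Wv n (j+1)) * phi n (Sp n k j))
        = aa n j * (zz n j ^ k - zz n (j+1) ^ k) := by
    intro j
    have hsp : (zz n j - zz n (j+1)) * phi n (Sp n k j) = zz n j ^ k - zz n (j+1) ^ k := by
      have := congrArg (phi n) (Sp_mul n k j)
      rw [map_mul, map_sub, map_sub, map_pow, map_pow] at this
      exact this
    calc phi n (C (Complex.I / 4)) * (phi n (Wv n j - Wv n (j+1)) * phi n (Sp n k j))
        = (aa n j * (zz n j - zz n (j+1))) * phi n (Sp n k j) := by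
          rw [aa_mul n hn j, map_mul, mul_assoc]
      _ = aa n j * ((zz n j - zz n (j+1)) * phi n (Sp n k j)) := by ring
      _ = _ := by rw [hsp]
  have h1 : NN n k = ∑ j : Fin n, aa n j * (zz n j ^ k - zz n (j+1) ^ k) := by
    rw [NN, nu_eq, map_mul, map_sum, Finset.mul_sum]
    apply Finset.sum_congr rfl
    intro j _
    rw [map_mul]
    exact term j
  have h2 : ∑ j : Fin n, aa n j * zz n (j+1) ^ k = ∑ j : Fin n, aa n (j-1) * zz n j ^ k := by
    apply Fintype.sum_equiv (Equiv.addRight (1 : Fin n))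
    intro x
    simp only [Equiv.coe_addRight, add_sub_cancel_right]
  rw [h1]
  rw [show (∑ j : Fin n, aa n j * (zz n j ^ k - zz n (j+1) ^ k))
      = (∑ j : Fin n, aa n j * zz n j ^ k) - ∑ j : Fin n, aa n j * zz n (j+1) ^ k by
    rw [← Finset.sum_sub_distrib]; apply Finset.sum_congr rfl; intro j _; ring]
  rw [h2, ← Finset.sum_sub_distrib]
  apply Finset.sum_congr rfl
  intro j _
  rw [bb]; ring

lemma bb_ne (hn : 3 ≤ n) (j : Fin n) : bb n j ≠ 0 := by
  rw [bb, sub_ne_zero]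
  intro h
  have hj : (j - 1) + 1 = j := by rw [sub_add_cancel]
  rw [aa, aa, hj, div_eq_div_iff (phiZ_sub_ne n j (j+1) (fun hh => add_one_ne n hn j hh.symm))
    (phiZ_sub_ne n (j-1) j (sub_one_ne n hn j))] at h
  rw [← map_mul, ← map_mul] at h
  have h' := phi_inj n h
  have := congrArg (MvPolynomial.eval
    (Sum.elim (fun i : Fin n => if i = j - 1 then (1:ℂ) else 0)
              (fun i : Fin n => if i = j then (1:ℂ) else 0))) h'
  have e1 : ¬ (j + 1 = j) := add_one_ne n hn j
  have e2 : ¬ (j = j - 1) := fun hh => sub_one_ne n hn j hh.symm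
  have e3 : ¬ (j + 1 = j - 1) := fun hh => sub_one_ne_add_one n hn j hh.symm
  have e4 : ¬ (j - 1 = j) := sub_one_ne n hn j
  simp only [map_mul, map_sub, eval_C, Zv, Wv, eval_X, Sum.elim_inl, Sum.elim_inr,
    if_pos rfl, if_neg e1, if_neg e2, if_neg e3, if_neg e4] at this
  norm_num [Complex.I_ne_zero] at this

lemma nu_zero : nu n 0 = 0 := by simp [nu]

lemma nu_one : nu n 1 = 0 := by
  have : ∑ j : Fin n, Wv n (j + 1) = ∑ j : Fin n, Wv n j :=
    Equiv.sum_comp (Equiv.addRight (1 : Fin n)) (Wv n)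
  simp [nu, Finset.sum_sub_distrib, this]

def gens : Set (KK n) := {x : KK n | ∃ k, 2 ≤ k ∧ k ≤ 2 * n - 1 ∧
  x = algebraMap (MvPolynomial (Fin n ⊕ Fin n) ℂ) (KK n) (nu n k)}

def LL : IntermediateField ℂ (KK n) := IntermediateField.adjoin ℂ (gens n)

lemma NN_mem (hn : 3 ≤ n) (k : ℕ) (hk : k ≤ 2 * n - 1) : NN n k ∈ LL n := by
  match k with
  | 0 => rw [NN, nu_zero, map_zero]; exact zero_mem _
  | 1 => rw [NN, nu_one, map_zero]; exact zero_mem _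
  | (m+2) => exact IntermediateField.subset_adjoin ℂ (gens n) ⟨m+2, by omega, hk, rfl⟩

def Amat : Matrix (Fin n) (Fin n) (KK n) := fun r i => NN n (r.val + i.val)

def Ahat (hn : 3 ≤ n) : Matrix (Fin n) (Fin n) (LL n) := fun r i =>
  ⟨NN n (r.val + i.val), NN_mem n hn _ (by have := r.isLt; have := i.isLt; omega)⟩

def vhat (hn : 3 ≤ n) : Fin n → LL n := fun r =>
  ⟨- NN n (n + r.val), neg_mem (NN_mem n hn _ (by have := r.isLt; omega))⟩

def Ev : Fin n → KK n := fun i => phi n (cf n i.val)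

lemma map_Ahat (hn : 3 ≤ n) :
    (algebraMap (LL n) (KK n)).mapMatrix (Ahat n hn) = Amat n := by
  ext r i
  rfl

lemma Amat_mulVec (hn : 3 ≤ n) :
    (Amat n).mulVec (Ev n) = fun r => - NN n (n + r.val) := by
  funext r
  have h := congrArg (phi n) (rec_R n hn r.val)
  rw [map_sum, map_zero, Finset.sum_range_succ] at h
  simp only [map_mul, cf_top, map_one, one_mul] at h
  show ∑ i : Fin n, Amat n r i * Ev n i = - NN n (n + r.val)
  have hs : ∑ i : Fin n, Amat n r i * Ev n i
      = ∑ i ∈ Finset.range n, phi n (cf n i) * phi n (nu n (r.val + i)) := by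
    rw [← Fin.sum_univ_eq_sum_range]
    apply Finset.sum_congr rfl
    intro i _
    rw [mul_comm]
    rfl
  rw [hs]
  have : NN n (n + r.val) = phi n (nu n (r.val + n)) := by rw [NN, Nat.add_comm]
  rw [this]
  exact eq_neg_of_add_eq_zero_left h

lemma Amat_factor (hn : 3 ≤ n) :
    Amat n = (Matrix.vandermonde (zz n)).transpose * Matrix.diagonal (bb n) * Matrix.vandermonde (zz n) := by
  ext r i
  rw [Matrix.mul_apply]
  have : ∀ j : Fin n, ((Matrix.vandermonde (zz n)).transpose * Matrix.diagonal (bb n)) r j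
      * Matrix.vandermonde (zz n) j i = bb n j * zz n j ^ (r.val + i.val) := by
    intro j
    rw [Matrix.mul_diagonal, Matrix.transpose_apply, Matrix.vandermonde_apply,
      Matrix.vandermonde_apply, pow_add]
    ring
  rw [Finset.sum_congr rfl (fun j _ => this j)]
  exact NN_rep n hn (r.val + i.val)

lemma detA_ne (hn : 3 ≤ n) : (Amat n).det ≠ 0 := by
  have hdet : (Amat n).det = (Matrix.vandermonde (zz n)).det * (∏ j : Fin n, bb n j)
      * (Matrix.vandermonde (zz n)).det := by
    rw [Amat_factor n hn, Matrix.det_mul, Matrix.det_mul, Matrix.det_transpose,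
      Matrix.det_diagonal]
  rw [hdet, Matrix.det_vandermonde]
  have hv : (∏ i : Fin n, ∏ j ∈ Finset.Ioi i, (zz n j - zz n i)) ≠ 0 := by
    rw [Finset.prod_ne_zero_iff]
    intro i _
    rw [Finset.prod_ne_zero_iff]
    intro j hj
    exact sub_ne_zero.mpr (fun h => absurd (zz_inj n h) (ne_of_gt (Finset.mem_Ioi.mp hj)))
  exact mul_ne_zero (mul_ne_zero hv (Finset.prod_ne_zero_iff.mpr fun j _ => bb_ne n hn j)) hv

lemma detAhat_unit (hn : 3 ≤ n) : IsUnit (Ahat n hn).det := by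
  rw [isUnit_iff_ne_zero]
  intro h
  apply detA_ne n hn
  rw [← map_Ahat n hn, ← RingHom.map_det, h, map_zero]

lemma detAmat_unit (hn : 3 ≤ n) : IsUnit (Amat n).det :=
  isUnit_iff_ne_zero.mpr (detA_ne n hn)

lemma cf_mem (hn : 3 ≤ n) (i : Fin n) : phi n (cf n i.val) ∈ LL n := by
  set f := algebraMap (LL n) (KK n) with hf
  set bhat := (Ahat n hn)⁻¹.mulVec (vhat n hn) with hbhat
  have hsolve : (Ahat n hn).mulVec bhat = vhat n hn := by
    rw [hbhat, Matrix.mulVec_mulVec, Matrix.mul_nonsing_inv _ (detAhat_unit n hn),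
      Matrix.one_mulVec]
  have hmap : (Amat n).mulVec (fun i => f (bhat i)) = fun r => - NN n (n + r.val) := by
    funext r
    have h2 := congrArg f (congrFun hsolve r)
    show ∑ i : Fin n, Amat n r i * f (bhat i) = - NN n (n + r.val)
    rw [show (Matrix.mulVec (Ahat n hn) bhat) r = ∑ i : Fin n, (Ahat n hn) r i * bhat i
      from rfl] at h2
    rw [map_sum] at h2
    have : ∀ i : Fin n, f ((Ahat n hn) r i * bhat i) = Amat n r i * f (bhat i) := by
      intro i
      rw [map_mul]
      rfl
    rw [Finset.sum_congr rfl (fun i _ => this i)] at h2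
    rw [h2]
    rfl
  have hEq : (Amat n).mulVec (Ev n) = (Amat n).mulVec (fun i => f (bhat i)) := by
    rw [Amat_mulVec n hn, hmap]
  have h0 : (Amat n).mulVec (Ev n - fun i => f (bhat i)) = 0 := by
    rw [Matrix.mulVec_sub, hEq, sub_self]
  have h1 : Ev n - (fun i => f (bhat i)) = 0 := by
    have h3 := congrArg ((Amat n)⁻¹.mulVec) h0
    rwa [Matrix.mulVec_mulVec, Matrix.nonsing_inv_mul _ (detAmat_unit n hn),
      Matrix.one_mulVec, Matrix.mulVec_zero] at h3
  have h4 : Ev n i = f (bhat i) := by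
    have := congrFun h1 i
    simpa [sub_eq_zero] using this
  rw [show phi n (cf n i.val) = Ev n i from rfl, h4]
  exact SetLike.coe_mem (bhat i)

lemma NN_mem_all (hn : 3 ≤ n) (j : ℕ) (hj : 2 ≤ j) : NN n j ∈ LL n := by
  induction j using Nat.strong_induction_on with
  | _ j IH =>
    by_cases hle : j ≤ 2 * n - 1
    · exact NN_mem n hn j hle
    · have hj2 : 2 * n ≤ j := by omega
      have h := congrArg (phi n) (rec_R n hn (j - n))
      rw [map_sum, map_zero, Finset.sum_range_succ] at h
      simp only [map_mul, cf_top, map_one, one_mul] at h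
      have hjn : j - n + n = j := by omega
      rw [hjn] at h
      have hNN : NN n j = - ∑ i ∈ Finset.range n, phi n (cf n i) * phi n (nu n (j - n + i)) :=
        eq_neg_of_add_eq_zero_right h
      rw [hNN]
      apply neg_mem
      apply sum_mem
      intro i hi
      have hi' := Finset.mem_range.mp hi
      exact mul_mem (cf_mem n hn ⟨i, hi'⟩)
        (IH (j - n + i) (by omega) (by omega))

end St4

/-- Every moment `ν_j`, `j ≥ 2`, viewed in `K`, lies in the subfield
`ℂ(ν₂,…,ν_{2n−1}) ⊆ K` generated over `ℂ` by the first `2n−2` moments. -/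
theorem statement4 (n : ℕ) [NeZero n] (hn : 3 ≤ n) (j : ℕ) (hj : 2 ≤ j) :
    algebraMap (MvPolynomial (Fin n ⊕ Fin n) ℂ) (KK n) (nu n j) ∈
      IntermediateField.adjoin ℂ
        {x : KK n | ∃ k, 2 ≤ k ∧ k ≤ 2 * n - 1 ∧
          x = algebraMap (MvPolynomial (Fin n ⊕ Fin n) ℂ) (KK n) (nu n k)} := by
  exact St4.NN_mem_all n hn j hj
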